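/- Let m be a nonzero integer with |m| ≤ 2^{254}, let v := 1 + ⌊log₂|m|⌋ and let w := the largest i ∈ ℕ with 2^i ∣ m. Define ℓ := 4 + v + ⌊log₂ v⌋ - w - a - b, where a = (the largest i ∈ {0,…,⌊log₂ v⌋} such that 2^i divides v - 2^{⌊log₂ v⌋}) if w = v - 1 and a = 0 otherwise, and b = (the largest i ∈ {0,…,3} such that 2^i divides ⌊log₂ v⌋) if v is a power of two and b = 0 otherwise (every power of 2 divides 0). Then no bit string M of length strictly less than ℓ satisfies τ(M) = m; that is, ℓ is the length of the shortest takum representation of m. -/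

import Mathlib

/-- Integer value of a bit string read MSB → LSB. -/
def bitsToNat (L : List Bool) : ℕ :=
  L.foldl (fun a b => 2 * a + (if b then 1 else 0)) 0

/-- The (linear) takum decoding function `τ`. A bit string (MSB → LSB, padded on the
right with zero "ghost bits" as needed) consists of a sign bit `S`, a direction bit `D`,
three regime bits `R` with regime `r = int(R)` if `D = 1` and `r = 7 - int(R)` if
`D = 0`, `r` characteristic bits `C` with characteristic `c = 2^r - 1 + int(C)` if
`D = 1` and `c = -2^(r+1) + 1 + int(C)` if `D = 0`, and fraction bits `F` with fraction
`f = int(F)/2^p ∈ [0,1)`. The all-zeros string encodes `0` (`some 0`), `10…0` encodes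
NaR (`none`), and every other string encodes `((1 - 3S) + f) · 2^e` with exponent
`e = (-1)^S (c + S)`. -/
def takumVal : List Bool → Option ℚ
  | [] => some 0
  | S :: rest =>
    if rest.all (fun b => b == false) then
      if S then none else some 0
    else
      let D : Bool := rest.getD 0 false
      let rawR : ℕ := bitsToNat [rest.getD 1 false, rest.getD 2 false, rest.getD 3 false]
      let r : ℕ := if D then rawR else 7 - rawR
      let C : List Bool := (rest.drop 4).take r
      let Cpad : List Bool := C ++ List.replicate (r - C.length) false
      let c : ℤ := if D then 2 ^ r - 1 + (bitsToNat Cpad : ℤ)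
                   else -(2 ^ (r + 1)) + 1 + (bitsToNat Cpad : ℤ)
      let F : List Bool := rest.drop (4 + r)
      let f : ℚ := (bitsToNat F : ℚ) / 2 ^ F.length
      let s : ℤ := if S then 1 else 0
      let e : ℤ := (if S then -1 else 1) * (c + s)
      some (((1 - 3 * (s : ℚ)) + f) * 2 ^ e)


/-!
Write the string as `S :: rest`. Since `2^(v-1) ≤ |m| < 2^v`, the value fixes the characteristic:
`c = v - 1` for `S = 0`, and `c = -v` for `S = 1`, except that `c = 1 - v` when
`|m| = 2^(v-1)`.

If `|m|` is not a power of two, then `|c| + 1` is `v` or `v + 1`, so the regime is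
`r = ⌊log₂ v⌋`, and `m = (s + F / 2^p) · 2^(v-1)` makes `2^(v-1-p)` divide `m`, so
`p ≥ v - 1 - w` fraction bits are present: the string has at least `5 + r + p` bits.

If `|m| = 2^(v-1)` the fraction may be empty, and the only bits that can be left to the ghost
bits are trailing zeros. The characteristic field holds `v - 2^r` (`D = 1`) or `2^(r+1) - v`
(`D = 0`); unless `v` is a power of two both have the 2-adic valuation of `v - 2^⌊log₂ v⌋`,
which bounds the saving by `a`. If `v` is a power of two the characteristic field is zero and
the regime field, which holds `⌊log₂ v⌋` or `8 - ⌊log₂ v⌋`, ends in at most `b` zeros.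
-/

theorem foldl_bit_step_eq (L : List Bool) (a : ℕ) :
    L.foldl (fun a b => 2 * a + (if b then 1 else 0)) a = a * 2 ^ L.length + bitsToNat L := by
  induction L generalizing a with
  | nil => simp [bitsToNat]
  | cons b t ih =>
    rw [bitsToNat, List.foldl_cons, List.foldl_cons, ih, ih, List.length_cons]
    ring

theorem bitsToNat_append (L₁ L₂ : List Bool) :
    bitsToNat (L₁ ++ L₂) = bitsToNat L₁ * 2 ^ L₂.length + bitsToNat L₂ := by
  rw [bitsToNat, List.foldl_append, foldl_bit_step_eq]
  rfl

theorem bitsToNat_lt (L : List Bool) : bitsToNat L < 2 ^ L.length := by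
  induction L with
  | nil => simp [bitsToNat]
  | cons b t ih =>
    have hb : bitsToNat [b] ≤ 1 := by cases b <;> simp [bitsToNat]
    rw [← List.singleton_append, bitsToNat_append, List.length_append, List.length_singleton,
      pow_add]
    nlinarith

theorem bitsToNat_replicate_false (k : ℕ) : bitsToNat (List.replicate k false) = 0 := by
  induction k with
  | zero => rfl
  | succ k ih =>
    rw [List.replicate_succ', bitsToNat_append, ih]
    rfl

theorem Nat.eq_two_pow_of_dvd_of_lt {n q : ℕ} (hdvd : 2 ^ q ∣ n) (hn : n ≠ 0)
    (hlt : n < 2 ^ (q + 1)) : n = 2 ^ q := by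
  obtain ⟨t, rfl⟩ := hdvd
  have ht : t < 2 := by
    rw [pow_succ] at hlt
    exact lt_of_mul_lt_mul_left hlt (Nat.zero_le _)
  have ht0 : t ≠ 0 := by rintro rfl; simp at hn
  rw [show t = 1 by omega, mul_one]

theorem abs_intCast_eq_natAbs (m : ℤ) : |(m : ℚ)| = (m.natAbs : ℚ) := by
  rw [Nat.cast_natAbs, Int.cast_abs]

theorem Int.log_two_abs_intCast (m : ℤ) : Int.log 2 |(m : ℚ)| = Nat.log 2 m.natAbs := by
  rw [abs_intCast_eq_natAbs, Int.log_natCast]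

theorem Int.log_two_mul_zpow {s : ℚ} (hs₁ : 1 ≤ s) (hs₂ : s < 2) (e : ℤ) :
    Int.log 2 (s * 2 ^ e) = e := by
  have hpos : 0 < s * 2 ^ e := by positivity
  refine le_antisymm (Int.lt_add_one_iff.1 ((Int.lt_zpow_iff_log_lt one_lt_two hpos).1 ?_))
    ((Int.zpow_le_iff_le_log one_lt_two hpos).1 ?_)
  · rw [Nat.cast_ofNat, zpow_add_one₀ two_ne_zero]
    exact (mul_lt_mul_of_pos_right hs₂ (zpow_pos two_pos e)).trans_eq (mul_comm _ _)
  · rw [Nat.cast_ofNat]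
    exact le_mul_of_one_le_left (by positivity) hs₁

theorem two_sub_mul_zpow_mem_Ioc {f : ℚ} (hf₀ : 0 ≤ f) (hf₁ : f < 1) (e : ℤ) :
    (2 - f) * 2 ^ e ∈ Set.Ioc (2 ^ e) (2 ^ (e + 1)) := by
  rw [Set.mem_Ioc, zpow_add_one₀ two_ne_zero]
  have : (0 : ℚ) < 2 ^ e := by positivity
  constructor <;> nlinarith

theorem le_add_of_intCast_eq_mul_two_pow {m s : ℤ} {w N P q : ℕ}
    (hw : ∀ i : ℕ, (2 : ℤ) ^ i ∣ m → i ≤ w) (h : (m : ℚ) = (s + N / 2 ^ P) * 2 ^ q) :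
    q ≤ P + w := by
  by_contra! hq
  obtain ⟨d, rfl⟩ := Nat.exists_eq_add_of_le (by omega : P ≤ q)
  have hm : m = (s * 2 ^ P + N) * 2 ^ d := by
    rw [pow_add] at h
    field_simp at h
    exact_mod_cast h
  have := hw d (hm ▸ dvd_mul_left _ _)
  omega

namespace Takum

/- The fields of the bits `rest` that follow the sign bit, as `takumVal` reads them. -/

def dir (rest : List Bool) : Bool := rest.getD 0 false

def regimeBits (rest : List Bool) : ℕ :=
  bitsToNat [rest.getD 1 false, rest.getD 2 false, rest.getD 3 false]

def regime (rest : List Bool) : ℕ := if dir rest then regimeBits rest else 7 - regimeBits rest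

def charField (rest : List Bool) : List Bool := (rest.drop 4).take (regime rest)

def charBits (rest : List Bool) : ℕ :=
  bitsToNat (charField rest ++ List.replicate (regime rest - (charField rest).length) false)

def characteristic (rest : List Bool) : ℤ :=
  if dir rest then 2 ^ regime rest - 1 + (charBits rest : ℤ)
  else -(2 ^ (regime rest + 1)) + 1 + (charBits rest : ℤ)

def fracField (rest : List Bool) : List Bool := rest.drop (4 + regime rest)

def fracVal (rest : List Bool) : ℚ :=
  (bitsToNat (fracField rest) : ℚ) / 2 ^ (fracField rest).length

variable {rest : List Bool} {m : ℤ}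

theorem takumVal_false_cons (h : ¬ rest.all (· == false)) :
    takumVal (false :: rest) = some ((1 + fracVal rest) * 2 ^ characteristic rest) := by
  rw [takumVal, if_neg h]
  norm_num [fracVal, fracField, characteristic, charBits, charField, regime, dir, regimeBits]

theorem takumVal_true_cons (h : ¬ rest.all (· == false)) :
    takumVal (true :: rest) = some ((-2 + fracVal rest) * 2 ^ (-(characteristic rest + 1))) := by
  rw [takumVal, if_neg h]
  norm_num [fracVal, fracField, characteristic, charBits, charField, regime, dir, regimeBits]

theorem exists_cons_of_takumVal_eq_some {M : List Bool} {x : ℚ} (h : takumVal M = some x)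
    (hx : x ≠ 0) : ∃ S rest, M = S :: rest ∧ ¬ rest.all (· == false) := by
  match M with
  | [] => exact absurd (Option.some.inj h).symm (by simpa [takumVal] using hx)
  | S :: rest =>
    refine ⟨S, rest, rfl, fun hall => ?_⟩
    rw [takumVal, if_pos hall] at h
    cases S <;> simp_all

theorem two_pow_dvd_regimeBits : 2 ^ (4 - rest.length) ∣ regimeBits rest := by
  match rest with
  | [] | [_] => simp [regimeBits, bitsToNat]
  | [_, b] => cases b <;> simp [regimeBits, bitsToNat]
  | [_, b, c] => cases b <;> cases c <;> simp [regimeBits, bitsToNat]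
  | _ :: _ :: _ :: _ :: _ => simp

theorem regimeBits_le : regimeBits rest ≤ 7 :=
  Nat.le_pred_of_lt (bitsToNat_lt _)

theorem charField_length : (charField rest).length = min (regime rest) (rest.length - 4) := by
  rw [charField, List.length_take, List.length_drop]

theorem charBits_eq :
    charBits rest = bitsToNat (charField rest) * 2 ^ (regime rest - (charField rest).length) := by
  rw [charBits, bitsToNat_append, bitsToNat_replicate_false, List.length_replicate, add_zero]

theorem charBits_lt : charBits rest < 2 ^ regime rest := by
  have h := bitsToNat_lt (charField rest ++
    List.replicate (regime rest - (charField rest).length) false)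
  rwa [List.length_append, List.length_replicate, Nat.add_sub_cancel' (by
    rw [charField_length]; exact min_le_left _ _)] at h

theorem two_pow_dvd_charBits : 2 ^ (regime rest - (rest.length - 4)) ∣ charBits rest := by
  rw [charBits_eq, charField_length, show regime rest - min (regime rest) (rest.length - 4) =
    regime rest - (rest.length - 4) by omega]
  exact dvd_mul_left _ _

theorem fracField_length : (fracField rest).length = rest.length - (4 + regime rest) :=
  List.length_drop

theorem fracVal_nonneg : 0 ≤ fracVal rest := by
  unfold fracVal
  positivity

theorem fracVal_lt_one : fracVal rest < 1 := by
  rw [fracVal, div_lt_one (by positivity)]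
  exact_mod_cast bitsToNat_lt _

theorem characteristic_nonneg_iff : 0 ≤ characteristic rest ↔ dir rest = true := by
  have hcc : (charBits rest : ℤ) < 2 ^ regime rest := by exact_mod_cast charBits_lt
  have hpow : (0 : ℤ) < 2 ^ regime rest := by positivity
  cases h : dir rest <;> simp only [characteristic, h, if_true, Bool.false_eq_true, if_false,
    iff_true, iff_false, not_le, pow_succ] <;> omega

theorem natAbs_characteristic_add_one :
    (characteristic rest).natAbs + 1 = if dir rest then 2 ^ regime rest + charBits rest
      else 2 ^ (regime rest + 1) - charBits rest := by
  have hcc := charBits_lt (rest := rest)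
  have hpow : 0 < 2 ^ regime rest := by positivity
  have hcast : ((2 ^ regime rest : ℕ) : ℤ) = 2 ^ regime rest := Nat.cast_pow 2 _
  cases h : dir rest <;>
    simp only [characteristic, h, Bool.false_eq_true, if_true, if_false, pow_succ] <;> omega

theorem regime_eq_log_of_characteristic_eq {q : ℕ} (h : characteristic rest = q) :
    regime rest = Nat.log 2 (q + 1) := by
  have hd : dir rest = true := characteristic_nonneg_iff.1 (h ▸ Int.natCast_nonneg q)
  have hq := natAbs_characteristic_add_one (rest := rest)
  rw [h, hd, if_pos rfl, Int.natAbs_natCast] at hq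
  have := charBits_lt (rest := rest)
  exact (Nat.log_eq_of_pow_le_of_lt_pow (by omega) (by rw [pow_succ]; omega)).symm

theorem regime_eq_log_of_characteristic_eq_neg {q : ℕ} (h : characteristic rest = -(q + 1)) :
    regime rest = Nat.log 2 (q + 1) := by
  have hd : dir rest = false := Bool.eq_false_iff.2 fun hd => by
    have := characteristic_nonneg_iff.2 hd
    omega
  have hq := natAbs_characteristic_add_one (rest := rest)
  rw [h, hd, if_neg Bool.false_ne_true] at hq
  have := charBits_lt (rest := rest)
  have := pow_succ 2 (regime rest)
  exact (Nat.log_eq_of_pow_le_of_lt_pow (by omega) (by omega)).symm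

theorem two_pow_dvd_log_of_natAbs_characteristic {k : ℕ} (hn : 1 ≤ rest.length)
    (hc : (characteristic rest).natAbs + 1 = 2 ^ k) : 2 ^ (4 - rest.length) ∣ k := by
  have hr := natAbs_characteristic_add_one (rest := rest)
  have hcc := charBits_lt (rest := rest)
  have hraw := two_pow_dvd_regimeBits (rest := rest)
  have hpow := pow_succ 2 (regime rest)
  rw [hc] at hr
  cases hd : dir rest <;> simp only [hd, Bool.false_eq_true, if_true, if_false] at hr
  · have hk : k = regime rest + 1 := by
      have h₁ := (Nat.pow_lt_pow_iff_right one_lt_two).1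
        (show 2 ^ regime rest < 2 ^ k by omega)
      have h₂ := (Nat.pow_le_pow_iff_right one_lt_two).1
        (show 2 ^ k ≤ 2 ^ (regime rest + 1) by omega)
      omega
    have hk' : k = 8 - regimeBits rest := by
      have := regimeBits_le (rest := rest)
      simp only [regime, hd, Bool.false_eq_true, if_false] at hk
      omega
    rw [hk']
    exact Nat.dvd_sub (pow_dvd_pow 2 (by omega : 4 - rest.length ≤ 3)) hraw
  · have hk : k = regime rest := by
      rw [← Nat.log_pow one_lt_two k]
      exact Nat.log_eq_of_pow_le_of_lt_pow (by omega) (by omega)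
    simpa [hk, regime, hd] using hraw

theorem two_pow_dvd_sub_of_natAbs_characteristic {v : ℕ}
    (hc : (characteristic rest).natAbs + 1 = v) (hv : v ≠ 2 ^ Nat.log 2 v) :
    4 ≤ rest.length ∧ 2 ^ (Nat.log 2 v - (rest.length - 4)) ∣ v - 2 ^ Nat.log 2 v := by
  have hr := natAbs_characteristic_add_one (rest := rest)
  have hcc := charBits_lt (rest := rest)
  have hdvd := two_pow_dvd_charBits (rest := rest)
  have hpow := pow_succ 2 (regime rest)
  rw [hc] at hr
  have hcc0 : charBits rest ≠ 0 := by
    intro h0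
    apply hv
    cases hd : dir rest <;> simp only [hd, h0, Bool.false_eq_true, if_true, if_false,
      Nat.sub_zero, add_zero] at hr <;> rw [hr, Nat.log_pow one_lt_two]
  have hlog : Nat.log 2 v = regime rest := by
    cases hd : dir rest <;> simp only [hd, Bool.false_eq_true, if_true, if_false] at hr <;>
      exact Nat.log_eq_of_pow_le_of_lt_pow (by omega) (by omega)
  refine ⟨?_, ?_⟩
  · by_contra hn
    rw [show regime rest - (rest.length - 4) = regime rest by omega] at hdvd
    exact hcc0 (Nat.eq_zero_of_dvd_of_lt hdvd hcc)
  · rw [hlog]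
    cases hd : dir rest <;> simp only [hd, Bool.false_eq_true, if_true, if_false] at hr
    · rw [show v - 2 ^ regime rest = 2 ^ regime rest - charBits rest by omega]
      exact Nat.dvd_sub (pow_dvd_pow 2 (Nat.sub_le _ _)) hdvd
    · rwa [show v - 2 ^ regime rest = charBits rest by omega]

theorem four_add_log_le_of_natAbs_characteristic {v : ℕ} (hn : 1 ≤ rest.length)
    (hc : (characteristic rest).natAbs + 1 = v) :
    4 + Nat.log 2 v ≤ rest.length +
      Nat.findGreatest (fun i => 2 ^ i ∣ (v - 2 ^ Nat.log 2 v)) (Nat.log 2 v) +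
      (if v = 2 ^ Nat.log 2 v then Nat.findGreatest (fun i => 2 ^ i ∣ Nat.log 2 v) 3 else 0) := by
  by_cases hv : v = 2 ^ Nat.log 2 v
  · have ha : Nat.findGreatest (fun i => 2 ^ i ∣ (v - 2 ^ Nat.log 2 v)) (Nat.log 2 v) =
        Nat.log 2 v := Nat.findGreatest_eq (by simp [← hv])
    have hb : 4 - rest.length ≤ Nat.findGreatest (fun i => 2 ^ i ∣ Nat.log 2 v) 3 :=
      Nat.le_findGreatest (by omega) (two_pow_dvd_log_of_natAbs_characteristic hn (hc.trans hv))
    rw [if_pos hv, ha]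
    omega
  · obtain ⟨hn4, hdvd⟩ := two_pow_dvd_sub_of_natAbs_characteristic hc hv
    have ha := Nat.le_findGreatest (P := fun i => 2 ^ i ∣ (v - 2 ^ Nat.log 2 v))
      (Nat.sub_le _ _) hdvd
    rw [if_neg hv]
    omega

theorem characteristic_eq_log_of_takumVal_false_cons (hrest : ¬ rest.all (· == false))
    (h : takumVal (false :: rest) = some (m : ℚ)) : characteristic rest = Nat.log 2 m.natAbs := by
  rw [takumVal_false_cons hrest, Option.some.injEq] at h
  have hf₀ := fracVal_nonneg (rest := rest)
  have hf₁ := fracVal_lt_one (rest := rest)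
  rw [← Int.log_two_abs_intCast, ← h, abs_of_pos (mul_pos (by linarith) (zpow_pos two_pos _)),
    Int.log_two_mul_zpow (by linarith) (by linarith)]

theorem abs_mem_Ioc_of_takumVal_true_cons (hrest : ¬ rest.all (· == false))
    (h : takumVal (true :: rest) = some (m : ℚ)) :
    |(m : ℚ)| ∈ Set.Ioc (2 ^ (-(characteristic rest + 1))) (2 ^ (-characteristic rest)) := by
  rw [takumVal_true_cons hrest, Option.some.injEq] at h
  have hf₀ := fracVal_nonneg (rest := rest)
  have hf₁ := fracVal_lt_one (rest := rest)
  have hm : |(m : ℚ)| = (2 - fracVal rest) * 2 ^ (-(characteristic rest + 1)) := by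
    rw [← h, abs_of_neg (mul_neg_of_neg_of_pos (by linarith) (zpow_pos two_pos _))]
    ring
  rw [hm, show -characteristic rest = -(characteristic rest + 1) + 1 by ring]
  exact two_sub_mul_zpow_mem_Ioc hf₀ hf₁ _

theorem natAbs_characteristic_of_natAbs_eq_two_pow {S : Bool} {q : ℕ}
    (hrest : ¬ rest.all (· == false)) (h : takumVal (S :: rest) = some (m : ℚ))
    (hm : m.natAbs = 2 ^ q) : (characteristic rest).natAbs = q := by
  cases S
  · rw [characteristic_eq_log_of_takumVal_false_cons hrest h, hm, Nat.log_pow one_lt_two,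
      Int.natAbs_natCast]
  · obtain ⟨hlo, hhi⟩ := abs_mem_Ioc_of_takumVal_true_cons hrest h
    rw [abs_intCast_eq_natAbs, hm, Nat.cast_pow, Nat.cast_ofNat, ← zpow_natCast] at hlo hhi
    have h₁ := (zpow_lt_zpow_iff_right₀ one_lt_two).1 hlo
    have h₂ := (zpow_le_zpow_iff_right₀ one_lt_two).1 hhi
    omega

theorem regime_eq_log_of_two_pow_lt_natAbs {S : Bool} {q : ℕ}
    (hrest : ¬ rest.all (· == false)) (h : takumVal (S :: rest) = some (m : ℚ))
    (hlo : 2 ^ q < m.natAbs) (hhi : m.natAbs < 2 ^ (q + 1)) :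
    regime rest = Nat.log 2 (q + 1) ∧ ∃ s : ℤ, (m : ℚ) = (s + fracVal rest) * 2 ^ q := by
  cases S
  · have hc := characteristic_eq_log_of_takumVal_false_cons hrest h
    rw [Nat.log_eq_of_pow_le_of_lt_pow hlo.le hhi] at hc
    refine ⟨regime_eq_log_of_characteristic_eq hc, 1, ?_⟩
    rw [takumVal_false_cons hrest, Option.some.injEq, hc, zpow_natCast] at h
    exact_mod_cast h.symm
  · obtain ⟨h₁, h₂⟩ := abs_mem_Ioc_of_takumVal_true_cons hrest h
    have hlo' : (2 : ℚ) ^ (q : ℤ) < |(m : ℚ)| := by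
      rw [abs_intCast_eq_natAbs, zpow_natCast]
      exact_mod_cast hlo
    have hhi' : |(m : ℚ)| < 2 ^ ((q : ℤ) + 1) := by
      rw [abs_intCast_eq_natAbs, ← Nat.cast_one, ← Nat.cast_add, zpow_natCast]
      exact_mod_cast hhi
    have e₁ := (zpow_lt_zpow_iff_right₀ one_lt_two).1 (h₁.trans hhi')
    have e₂ := (zpow_lt_zpow_iff_right₀ one_lt_two).1 (hlo'.trans_le h₂)
    have hc : characteristic rest = -(q + 1) := by omega
    refine ⟨regime_eq_log_of_characteristic_eq_neg hc, -2, ?_⟩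
    rw [takumVal_true_cons hrest, Option.some.injEq, hc,
      show -(-((q : ℤ) + 1) + 1) = q by ring, zpow_natCast] at h
    exact_mod_cast h.symm

end Takum
theorem takum_integer_representation_minimal_general (m : ℤ) (hm : m ≠ 0)
    (v w ℓ : ℕ)
    (hv : v = 1 + Nat.log 2 m.natAbs)
    (hw1 : (2 : ℤ) ^ w ∣ m) (hw2 : ∀ i : ℕ, (2 : ℤ) ^ i ∣ m → i ≤ w)
    (hℓ : ℓ = 4 + v + Nat.log 2 v - w -
      (if w = v - 1 then
        Nat.findGreatest (fun i => 2 ^ i ∣ (v - 2 ^ Nat.log 2 v)) (Nat.log 2 v)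
       else 0) -
      (if v = 2 ^ Nat.log 2 v then
        Nat.findGreatest (fun i => 2 ^ i ∣ Nat.log 2 v) 3
       else 0)) :
    ∀ M : List Bool, M.length < ℓ → takumVal M ≠ some (m : ℚ) := by
  intro M hlen hM
  obtain ⟨S, rest, rfl, hrest⟩ :=
    Takum.exists_cons_of_takumVal_eq_some hM (Int.cast_ne_zero.2 hm)
  have hn : 1 ≤ rest.length := List.length_pos_iff.2 (by rintro rfl; simp at hrest)
  rw [List.length_cons] at hlen
  set q := Nat.log 2 m.natAbs
  have hm₀ : m.natAbs ≠ 0 := Int.natAbs_ne_zero.2 hm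
  have hq₁ : 2 ^ q ≤ m.natAbs := Nat.pow_log_le_self 2 hm₀
  have hq₂ : m.natAbs < 2 ^ (q + 1) := Nat.lt_pow_succ_log_self one_lt_two _
  have hw : 2 ^ w ∣ m.natAbs := Int.natCast_dvd.1 (by exact_mod_cast hw1)
  have hwq : w < q + 1 :=
    (Nat.pow_lt_pow_iff_right one_lt_two).1 ((Nat.le_of_dvd (by omega) hw).trans_lt hq₂)
  by_cases hwv : w = v - 1
  · have hpow := Nat.eq_two_pow_of_dvd_of_lt (show w = q by omega ▸ hw) hm₀ hq₂
    have hc := Takum.natAbs_characteristic_of_natAbs_eq_two_pow hrest hM hpow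
    have := Takum.four_add_log_le_of_natAbs_characteristic hn (v := v) (by omega)
    rw [if_pos hwv] at hℓ
    omega
  · have hlo : 2 ^ q < m.natAbs := by
      refine hq₁.lt_of_ne fun h => hwv ?_
      have := hw2 q (Int.natCast_dvd.2 (h ▸ dvd_rfl))
      omega
    obtain ⟨hr, s, hs⟩ := Takum.regime_eq_log_of_two_pow_lt_natAbs hrest hM hlo hq₂
    rw [← show v = q + 1 by omega] at hr
    have hP := le_add_of_intCast_eq_mul_two_pow hw2 hs
    rw [Takum.fracField_length] at hP
    rw [if_neg hwv] at hℓ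
    omega

/-- **Takum integer representation (minimality).**
Let `m ≠ 0` with `|m| ≤ 2^254`, `v = 1 + ⌊log₂ |m|⌋`, `w` the largest `i` with
`2^i ∣ m`, and `ℓ = 4 + v + ⌊log₂ v⌋ - w - a - b`, where `a` is the largest
`i ∈ {0,…,⌊log₂ v⌋}` with `2^i ∣ v - 2^⌊log₂ v⌋` if `w = v - 1` (and `a = 0`
otherwise), and `b` is the largest `i ∈ {0,…,3}` with `2^i ∣ ⌊log₂ v⌋` if `v` is a
power of two (and `b = 0` otherwise). Then no bit string of length strictly less than
`ℓ` is a takum representation of `m`. -/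
theorem takum_integer_representation_minimal (m : ℤ) (hm : m ≠ 0) (hbound : |m| ≤ 2 ^ 254)
    (v w ℓ : ℕ)
    (hv : v = 1 + Nat.log 2 m.natAbs)
    (hw1 : (2 : ℤ) ^ w ∣ m) (hw2 : ∀ i : ℕ, (2 : ℤ) ^ i ∣ m → i ≤ w)
    (hℓ : ℓ = 4 + v + Nat.log 2 v - w -
      (if w = v - 1 then
        Nat.findGreatest (fun i => 2 ^ i ∣ (v - 2 ^ Nat.log 2 v)) (Nat.log 2 v)
       else 0) -
      (if v = 2 ^ Nat.log 2 v then
        Nat.findGreatest (fun i => 2 ^ i ∣ Nat.log 2 v) 3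
       else 0)) :
    ∀ M : List Bool, M.length < ℓ → takumVal M ≠ some (m : ℚ) :=
  takum_integer_representation_minimal_general m hm v w ℓ hv hw1 hw2 hℓ
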